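/- (Swapping a conjunction with an upstream chain of temporal operators preserves eligibility.) Let T_φ be the syntax tree of a CaTL formula φ containing a chain of nodes v_1, …, v_n, each of which is a unary temporal node F_[a_k,b_k] or G_[a_k,b_k], with v_{k−1} the parent of v_k, followed by a conjunction node v (the child of v_n) with children subtrees τ_1, …, τ_m. Let T' be the tree obtained by replacing the subtree rooted at v_1 with the tree ⟨∧ | ⟨G_[a_1,b_1] … G_[a_n,b_n] | τ_i⟩, i = 1,…,m⟩, i.e., a conjunction node whose i-th child is the chain G_[a_1,b_1], …, G_[a_n,b_n] (each temporal node replaced by G with the same time bounds) applied to τ_i; the leaves are unchanged, and for an assignment α on T_φ let α' be the induced assignment on T' (agreeing with α on every leaf). If α' is eligible for T', then α is eligible for T_φ. -/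

import Mathlib

open scoped Classical

/-- A CaTL task `T = (d, π, cp_T, cp)`: a duration, an atomic proposition, a nonempty
finite set of required capabilities, and a counting map. -/
structure CTask (AP Cap : Type) where
  dur : ℕ
  prop : AP
  cpT : Finset Cap
  cpT_nonempty : cpT.Nonempty
  cp : Cap → ℤ

/-- CaTL syntax trees with an assignment of agents baked into the leaves:
each leaf (task occurrence) `λ` carries the set `A = α(λ) ⊆ J` of agents assigned to it. -/
inductive ATree (AP Cap J : Type) : Type where
  | leaf (T : CTask AP Cap) (A : Finset J)
  | and (l r : ATree AP Cap J)
  | or (l r : ATree AP Cap J)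
  | untl (a b : ℕ) (hab : a ≤ b) (l r : ATree AP Cap J)
  | ev (a b : ℕ) (hab : a ≤ b) (c : ATree AP Cap J)
  | alw (a b : ℕ) (hab : a ≤ b) (c : ATree AP Cap J)

variable {Q AP Cap J : Type}

/-- Capability excess `ce(α, v) : Cap → ℤ ∪ {+∞}` (embedded in `EReal`):
at a leaf it is the number of assigned agents with capability `c` minus `cp(c)` for
required capabilities and `+∞` otherwise; at a disjunction it is the componentwise max
of the children; at every other internal node it is the componentwise min. -/
noncomputable def ATree.ce (caps : J → Finset Cap) : ATree AP Cap J → Cap → EReal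
  | .leaf T A, c =>
      if c ∈ T.cpT then (((((A.filter (fun j => c ∈ caps j)).card : ℤ) - T.cp c : ℤ) : ℝ) : EReal)
      else (⊤ : EReal)
  | .and l r, c => min (l.ce caps c) (r.ce caps c)
  | .or l r, c => max (l.ce caps c) (r.ce caps c)
  | .untl _ _ _ l r, c => min (l.ce caps c) (r.ce caps c)
  | .ev _ _ _ t, c => t.ce caps c
  | .alw _ _ _ t, c => t.ce caps c

/-- An assignment is eligible for a syntax tree if the capability excess at the root
is nonnegative for every capability. -/
def ATree.elig (caps : J → Finset Cap) (T : ATree AP Cap J) : Prop :=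
  ∀ c : Cap, 0 ≤ T.ce caps c

/-- One-hole contexts for CaTL syntax trees: a syntax tree with one designated
subtree position (node) left open. -/
inductive Ctx (AP Cap J : Type) : Type where
  | hole
  | andL (C : Ctx AP Cap J) (r : ATree AP Cap J)
  | andR (l : ATree AP Cap J) (C : Ctx AP Cap J)
  | orL (C : Ctx AP Cap J) (r : ATree AP Cap J)
  | orR (l : ATree AP Cap J) (C : Ctx AP Cap J)
  | untlL (a b : ℕ) (hab : a ≤ b) (C : Ctx AP Cap J) (r : ATree AP Cap J)
  | untlR (a b : ℕ) (hab : a ≤ b) (l : ATree AP Cap J) (C : Ctx AP Cap J)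
  | ev (a b : ℕ) (hab : a ≤ b) (C : Ctx AP Cap J)
  | alw (a b : ℕ) (hab : a ≤ b) (C : Ctx AP Cap J)

/-- Filling the hole of a context with a tree: the result is the full syntax tree in
which the given tree is the subtree rooted at the designated node; all other leaves
(and hence the assignment on them) are unchanged. -/
def Ctx.fill : Ctx AP Cap J → ATree AP Cap J → ATree AP Cap J
  | .hole, t => t
  | .andL C r, t => .and (C.fill t) r
  | .andR l C, t => .and l (C.fill t)
  | .orL C r, t => .or (C.fill t) r
  | .orR l C, t => .or l (C.fill t)
  | .untlL a b h C r, t => .untl a b h (C.fill t) r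
  | .untlR a b h l C, t => .untl a b h l (C.fill t)
  | .ev a b h C, t => .ev a b h (C.fill t)
  | .alw a b h C, t => .alw a b h (C.fill t)

/-- A time interval `[a, b]` with `a ≤ b`. -/
structure TInt where
  a : ℕ
  b : ℕ
  hab : a ≤ b

/-- The original chain of unary temporal operators applied to a tree:
`true` stands for always (`G_[a,b]`) and `false` for eventually (`F_[a,b]`). -/
def chainOrig : List (Bool × TInt) → ATree AP Cap J → ATree AP Cap J
  | [], t => t
  | (g, I) :: ops, t =>
      if g then .alw I.a I.b I.hab (chainOrig ops t) else .ev I.a I.b I.hab (chainOrig ops t)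

/-- The substituted chain: every temporal operator replaced by always (`G`) with the
same time bounds. -/
def chainG : List (Bool × TInt) → ATree AP Cap J → ATree AP Cap J
  | [], t => t
  | (_, I) :: ops, t => .alw I.a I.b I.hab (chainG ops t)

/-! Unary temporal operators do not change the capability excess, so both the original chain
over `τ₁ ∧ τ₂` and the conjunction of the `G`-chains over `τ₁` and `τ₂` have excess
`min (ce τ₁) (ce τ₂)`. Since the excess of a tree depends monotonically on the excess of any
of its subtrees (`min` and `max` are monotone), eligibility transfers through the context. -/

section

variable (caps : J → Finset Cap)

@[simp]
lemma ATree.ce_chainOrig (ops : List (Bool × TInt)) (t : ATree AP Cap J) :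
    (chainOrig ops t).ce caps = t.ce caps := by
  induction ops with
  | nil => rfl
  | cons op ops ih =>
    obtain ⟨g, I⟩ := op
    cases g <;> simpa [chainOrig, ATree.ce] using ih

@[simp]
lemma ATree.ce_chainG (ops : List (Bool × TInt)) (t : ATree AP Cap J) :
    (chainG ops t).ce caps = t.ce caps := by
  induction ops with
  | nil => rfl
  | cons op ops ih => simpa [chainG, ATree.ce] using ih

lemma ATree.ce_and (l r : ATree AP Cap J) : (ATree.and l r).ce caps = l.ce caps ⊓ r.ce caps :=
  funext fun _ => rfl

lemma ATree.ce_chainOrig_and (ops : List (Bool × TInt)) (τ₁ τ₂ : ATree AP Cap J) :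
    (chainOrig ops (.and τ₁ τ₂)).ce caps =
      (ATree.and (chainG ops τ₁) (chainG ops τ₂)).ce caps := by
  simp only [ATree.ce_chainOrig, ATree.ce_and, ATree.ce_chainG]

lemma Ctx.ce_fill_mono (C : Ctx AP Cap J) {t₁ t₂ : ATree AP Cap J}
    (h : t₁.ce caps ≤ t₂.ce caps) : (C.fill t₁).ce caps ≤ (C.fill t₂).ce caps := by
  induction C with
  | hole => exact h
  | andL _ _ ih | untlL _ _ _ _ _ ih => exact fun c => min_le_min (ih c) le_rfl
  | andR _ _ ih | untlR _ _ _ _ _ ih => exact fun c => min_le_min le_rfl (ih c)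
  | orL _ _ ih => exact fun c => max_le_max (ih c) le_rfl
  | orR _ _ ih => exact fun c => max_le_max le_rfl (ih c)
  | ev _ _ _ _ ih | alw _ _ _ _ ih => exact ih

lemma ATree.elig.of_ce_le {t₁ t₂ : ATree AP Cap J} (ht₁ : t₁.elig caps)
    (h : t₁.ce caps ≤ t₂.ce caps) : t₂.elig caps :=
  fun c => (ht₁ c).trans (h c)

end

/-- swapping a conjunction with an upstream chain of unary temporal
operators (each replaced by `G` with the same time bounds, pushed below the
conjunction onto each child) preserves eligibility: if the transformed tree is eligible
for the induced assignment, then the original tree is eligible. -/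
theorem conjunction_temporal_swap_preserves_eligibility
    (caps : J → Finset Cap) (C : Ctx AP Cap J) (ops : List (Bool × TInt))
    (τ₁ τ₂ : ATree AP Cap J)
    (h : ATree.elig caps (C.fill (.and (chainG ops τ₁) (chainG ops τ₂)))) :
    ATree.elig caps (C.fill (chainOrig ops (.and τ₁ τ₂))) :=
  h.of_ce_le caps <| C.ce_fill_mono caps (ATree.ce_chainOrig_and caps ops τ₁ τ₂).ge
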